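/- arXiv:1701.04873 — 2 statements merged into one kernel-verified Lean document; each statement's English description precedes it below -/
import Mathlib

section
/- Let n ≥ 3 and let a, a′ : Fin n → ℝ satisfy a_i ≠ 0 for all i. If a_i · a_j = a′_i · a′_j for all pairs i ≠ j, then either a′_i = a_i for all i, or a′_i = −a_i for all i. -/
/-- Sign singularity of star latent Gaussian trees: for `n ≥ 3`, if two vectors of nonzero
edge correlations induce the same pairwise products `a i * a j` for all `i ≠ j`, then they
agree up to one global sign flip. -/
theorem star_sign_singularity {n : ℕ} (hn : 3 ≤ n)
    (a a' : Fin n → ℝ) (ha : ∀ i, a i ≠ 0)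
    (h : ∀ i j, i ≠ j → a i * a j = a' i * a' j) :
    (∀ i, a' i = a i) ∨ (∀ i, a' i = -a i) := by
  have h0 : (0 : ℕ) < n := by omega
  have h1 : (1 : ℕ) < n := by omega
  have h2 : (2 : ℕ) < n := by omega
  set i0 : Fin n := ⟨0, h0⟩
  set i1 : Fin n := ⟨1, h1⟩
  set i2 : Fin n := ⟨2, h2⟩
  have h01 : i0 ≠ i1 := by simp [i0, i1, Fin.ext_iff]
  have h02 : i0 ≠ i2 := by simp [i0, i2, Fin.ext_iff]
  have h12 : i1 ≠ i2 := by simp [i1, i2, Fin.ext_iff]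
  -- a' i ≠ 0
  have ha' : ∀ i, a' i ≠ 0 := by
    intro i hi
    obtain ⟨j, hj⟩ : ∃ j : Fin n, j ≠ i := by
      by_cases hi0 : i = i0
      · exact ⟨i1, by rw [hi0]; exact fun hh => h01 hh.symm⟩
      · exact ⟨i0, fun hh => hi0 hh.symm⟩
    have := h i j (fun hh => hj hh.symm)
    rw [hi, zero_mul] at this
    exact mul_ne_zero (ha i) (ha j) this
  -- for each i there exist two other distinct indices
  have htwo : ∀ i : Fin n, ∃ j k : Fin n, j ≠ i ∧ k ≠ i ∧ j ≠ k := by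
    intro i
    refine ⟨if i = i0 then i1 else i0, if i = i2 then i1 else i2, ?_, ?_, ?_⟩
    · split
      · rename_i hh; rw [hh]; exact fun e => h01 e.symm
      · rename_i hh; exact fun e => hh e.symm
    · split
      · rename_i hh; rw [hh]; exact fun e => h12 e
      · rename_i hh; exact fun e => hh e.symm
    · by_cases hA : i = i0
      · by_cases hB : i = i2
        · exact absurd (hA.symm.trans hB) h02
        · simp only [if_pos hA, if_neg hB]; exact h12
      · by_cases hB : i = i2
        · simp only [if_neg hA, if_pos hB]; exact h01
        · simp only [if_neg hA, if_neg hB]; exact h02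
  -- squares agree
  have hsq : ∀ i, a' i = a i ∨ a' i = -a i := by
    intro i
    obtain ⟨j, k, hj, hk, hjk⟩ := htwo i
    have e1 : a i * a j = a' i * a' j := h i j (fun e => hj e.symm)
    have e2 : a i * a k = a' i * a' k := h i k (fun e => hk e.symm)
    have e3 : a j * a k = a' j * a' k := h j k hjk
    have key : a' i ^ 2 * (a' j * a' k) = a i ^ 2 * (a' j * a' k) := by
      calc a' i ^ 2 * (a' j * a' k) = (a' i * a' j) * (a' i * a' k) := by ring
        _ = (a i * a j) * (a i * a k) := by rw [e1, e2]
        _ = a i ^ 2 * (a j * a k) := by ring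
        _ = a i ^ 2 * (a' j * a' k) := by rw [e3]
    have hne : a' j * a' k ≠ 0 := mul_ne_zero (ha' j) (ha' k)
    have : a' i ^ 2 = a i ^ 2 := mul_right_cancel₀ hne key
    exact sq_eq_sq_iff_eq_or_eq_neg.mp this
  rcases hsq i0 with hpos | hneg
  · left
    intro i
    by_cases hi : i = i0
    · rw [hi, hpos]
    · have e := h i0 i (fun e => hi e.symm)
      rw [hpos] at e
      exact (mul_left_cancel₀ (ha i0) e).symm
  · right
    intro i
    by_cases hi : i = i0
    · rw [hi, hneg]
    · have e := h i0 i (fun e => hi e.symm)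
      rw [hneg] at e
      have : a i = -a' i := by
        have := mul_left_cancel₀ (ha i0) (by linarith [e] : a i0 * a i = a i0 * (-a' i))
        linarith
      linarith
end

section
/- Let (X, μ) and (Y, ν) be σ-finite measure spaces. Let p : X × Y → ℝ be measurable with p(x,y) > 0 everywhere, and define its marginal p_Y(y) = ∫_X p(x,y) dμ(x), assumed to satisfy 0 < p_Y(y) < ∞ for all y. Let f, f′ : X × Y → [0, ∞) be measurable with marginals g(y) = ∫_X f(x,y) dμ(x) and g′(y) = ∫_X f′(x,y) dμ(x). Assume the functions f·f′/p (on X × Y), g·g′/p_Y (on Y), f·(g′∘π_Y)/(p_Y∘π_Y) and f′·(g∘π_Y)/(p_Y∘π_Y) (on X × Y) are integrable, where π_Y(x,y) = y. Then ∫_{X×Y} f(x,y) f′(x,y)/p(x,y) d(μ×ν) − ∫_Y g(y) g′(y)/p_Y(y) dν = ∫_{X×Y} (1/p(x,y)) · (f(x,y) − g(y)·p(x,y)/p_Y(y)) · (f′(x,y) − g′(y)·p(x,y)/p_Y(y)) d(μ×ν). -/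
open MeasureTheory

/-- The Hessian-entry identity for conditional entropy of mixtures:
`∫∫ f f' / p − ∫ g g' / p_Y = ∫∫ (1/p)(f − g·p/p_Y)(f' − g'·p/p_Y)`,
where `g, g'` are the `Y`-marginals of `f, f'` and `p_Y` is the `Y`-marginal of `p`. -/
theorem hessian_entry_rewrite {X Y : Type*} [MeasurableSpace X] [MeasurableSpace Y]
    (μ : Measure X) (ν : Measure Y) [SigmaFinite μ] [SigmaFinite ν]
    (p : X × Y → ℝ) (hp_meas : Measurable p) (hp_pos : ∀ z, 0 < p z)
    (hp_int : ∀ y, Integrable (fun x => p (x, y)) μ)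
    (pY : Y → ℝ) (hpY : ∀ y, pY y = ∫ x, p (x, y) ∂μ) (hpY_pos : ∀ y, 0 < pY y)
    (f f' : X × Y → ℝ) (hf_meas : Measurable f) (hf'_meas : Measurable f')
    (hf_nonneg : ∀ z, 0 ≤ f z) (hf'_nonneg : ∀ z, 0 ≤ f' z)
    (g g' : Y → ℝ) (hg : ∀ y, g y = ∫ x, f (x, y) ∂μ) (hg' : ∀ y, g' y = ∫ x, f' (x, y) ∂μ)
    (hint1 : Integrable (fun z => f z * f' z / p z) (μ.prod ν))
    (hint2 : Integrable (fun y => g y * g' y / pY y) ν)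
    (hint3 : Integrable (fun z => f z * g' z.2 / pY z.2) (μ.prod ν))
    (hint4 : Integrable (fun z => f' z * g z.2 / pY z.2) (μ.prod ν)) :
    (∫ z, f z * f' z / p z ∂(μ.prod ν)) - (∫ y, g y * g' y / pY y ∂ν)
      = ∫ z, (1 / p z) * (f z - g z.2 * p z / pY z.2) * (f' z - g' z.2 * p z / pY z.2)
          ∂(μ.prod ν) := by
  have hp_ne : ∀ z, p z ≠ 0 := fun z => (hp_pos z).ne'
  have hpY_ne : ∀ y, pY y ≠ 0 := fun y => (hpY_pos y).ne'
  -- measurability of g, g', pY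
  have hg_meas : Measurable g := by
    have : g = fun y => ∫ x, f (x, y) ∂μ := funext hg
    rw [this]
    exact (hf_meas.stronglyMeasurable.integral_prod_left').measurable
  have hg'_meas : Measurable g' := by
    have : g' = fun y => ∫ x, f' (x, y) ∂μ := funext hg'
    rw [this]
    exact (hf'_meas.stronglyMeasurable.integral_prod_left').measurable
  have hpY_meas : Measurable pY := by
    have : pY = fun y => ∫ x, p (x, y) ∂μ := funext hpY
    rw [this]
    exact (hp_meas.stronglyMeasurable.integral_prod_left').measurable
  -- integrability of the fourth term
  have hT4_meas : AEStronglyMeasurable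
      (fun z : X × Y => g z.2 * g' z.2 * p z / (pY z.2) ^ 2) (μ.prod ν) :=
    (((hg_meas.comp measurable_snd).mul (hg'_meas.comp measurable_snd)).mul hp_meas
      |>.div ((hpY_meas.comp measurable_snd).pow_const 2)).aestronglyMeasurable
  have hT4 : Integrable (fun z : X × Y => g z.2 * g' z.2 * p z / (pY z.2) ^ 2) (μ.prod ν) := by
    rw [integrable_prod_iff' hT4_meas]
    constructor
    · refine Filter.Eventually.of_forall (fun y => ?_)
      have : (fun x => g y * g' y * p (x, y) / pY y ^ 2)
          = fun x => (g y * g' y / pY y ^ 2) * p (x, y) := by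
        funext x; ring
      rw [this]
      exact (hp_int y).const_mul _
    · have key : (fun y => ∫ x, ‖g y * g' y * p (x, y) / pY y ^ 2‖ ∂μ)
          = fun y => ‖g y * g' y / pY y‖ := by
        funext y
        have : (fun x => ‖g y * g' y * p (x, y) / pY y ^ 2‖)
            = fun x => (|g y * g' y| / pY y ^ 2) * p (x, y) := by
          funext x
          rw [Real.norm_eq_abs, abs_div, abs_mul, abs_of_pos (hp_pos (x, y)),
            abs_of_pos (pow_pos (hpY_pos y) 2)]
          ring
        rw [this, integral_const_mul, ← hpY y, Real.norm_eq_abs, abs_div,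
          abs_of_pos (hpY_pos y), pow_two, ← div_div, div_mul_cancel₀ _ (hpY_ne y)]
      rw [key]
      exact hint2.norm
  -- pointwise expansion
  have hpt : ∀ z : X × Y,
      (1 / p z) * (f z - g z.2 * p z / pY z.2) * (f' z - g' z.2 * p z / pY z.2)
        = f z * f' z / p z - f z * g' z.2 / pY z.2 - f' z * g z.2 / pY z.2
          + g z.2 * g' z.2 * p z / (pY z.2) ^ 2 := by
    intro z
    have h1 := hp_ne z
    have h2 := hpY_ne z.2
    field_simp
    ring
  rw [show (fun z : X × Y =>
      (1 / p z) * (f z - g z.2 * p z / pY z.2) * (f' z - g' z.2 * p z / pY z.2))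
      = fun z => f z * f' z / p z - f z * g' z.2 / pY z.2 - f' z * g z.2 / pY z.2
          + g z.2 * g' z.2 * p z / (pY z.2) ^ 2 from funext hpt]
  have i1 : Integrable (fun z => f z * f' z / p z - f z * g' z.2 / pY z.2) (μ.prod ν) :=
    hint1.sub hint3
  have i2 : Integrable
      (fun z => f z * f' z / p z - f z * g' z.2 / pY z.2 - f' z * g z.2 / pY z.2) (μ.prod ν) :=
    i1.sub hint4
  rw [integral_add i2 hT4, integral_sub i1 hint4, integral_sub hint1 hint3]
  -- Fubini computations
  have e3 : ∫ z, f z * g' z.2 / pY z.2 ∂(μ.prod ν) = ∫ y, g y * g' y / pY y ∂ν := by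
    rw [integral_prod_symm _ hint3]
    congr 1
    funext y
    have : (fun x => f (x, y) * g' y / pY y) = fun x => f (x, y) * (g' y / pY y) := by
      funext x; ring
    rw [this, integral_mul_const, ← hg y, mul_div_assoc]
  have e4 : ∫ z, f' z * g z.2 / pY z.2 ∂(μ.prod ν) = ∫ y, g y * g' y / pY y ∂ν := by
    rw [integral_prod_symm _ hint4]
    congr 1
    funext y
    have : (fun x => f' (x, y) * g y / pY y) = fun x => f' (x, y) * (g y / pY y) := by
      funext x; ring
    rw [this, integral_mul_const, ← hg' y]
    ring
  have e5 : ∫ z, g z.2 * g' z.2 * p z / (pY z.2) ^ 2 ∂(μ.prod ν)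
      = ∫ y, g y * g' y / pY y ∂ν := by
    rw [integral_prod_symm _ hT4]
    congr 1
    funext y
    have : (fun x => g y * g' y * p (x, y) / pY y ^ 2)
        = fun x => (g y * g' y / pY y ^ 2) * p (x, y) := by
      funext x; ring
    rw [this, integral_const_mul, ← hpY y, pow_two, ← div_div,
      div_mul_cancel₀ _ (hpY_ne y)]
  rw [e3, e4, e5]
  ring
end
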